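/- Consider two agents ag1 and ag2 modeled as a joint transition system executing the shared-belief protocol (plans rsb1, rsb2, rsb3): ag1 starts with goal reachSharedBel(b, ag2); rsb1 adds b[self] when not believed; rsb2 sends tell(b) to the other agent (which adds b[sender] to the receiver's belief base) and sends achieve(reachSharedBel(b, self)); rsb3 terminates when both b[self] and b[other] are believed. Assuming reliable message delivery and fair scheduling (every enabled step is eventually taken), every fair execution eventually reaches a state in which ag1 believes b[self] and b[ag2], and ag2 believes b[self] and b[ag1]. -/

import Mathlib

/-- Joint state of the shared-belief protocol: the four belief flags. -/
structure SBState where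
  ag1Self : Bool   -- ag1 believes b[self]
  ag1Other : Bool  -- ag1 believes b[ag2]
  ag2Self : Bool   -- ag2 believes b[self]
  ag2Other : Bool  -- ag2 believes b[ag1]
deriving DecidableEq

/-- The protocol transitions: (0) ag1 adds b[self] (rsb1); (1) ag1's tell makes ag2
believe b[ag1]; (2) ag1's achieve request starts ag2's protocol, which adds b[self]
at ag2; (3) ag2's tell makes ag1 believe b[ag2]. -/
inductive SBTrans | t0 | t1 | t2 | t3
deriving DecidableEq

def applyT : SBTrans → SBState → SBState
  | .t0, s => { s with ag1Self := true }
  | .t1, s => { s with ag2Other := true }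
  | .t2, s => { s with ag2Self := true }
  | .t3, s => { s with ag1Other := true }

/-- A transition is enabled when its precondition in the protocol holds and its
effect has not been achieved yet. -/
def enabledT : SBTrans → SBState → Prop
  | .t0, s => s.ag1Self = false
  | .t1, s => s.ag1Self = true ∧ s.ag2Other = false
  | .t2, s => s.ag2Other = true ∧ s.ag2Self = false
  | .t3, s => s.ag2Self = true ∧ s.ag1Other = false

def allShared (s : SBState) : Prop :=
  s.ag1Self = true ∧ s.ag1Other = true ∧ s.ag2Self = true ∧ s.ag2Other = true

/-!
Every transition only switches a belief flag on, so a conjunction of flags, once true, stays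
true. The four transitions form a chain in which each one is enabled, under the flags set by
its predecessors, exactly until its own flag is set; weak fairness therefore forces each flag
in turn, and the four of them then hold together.
-/

section TransitionSystem

variable {S T : Type*} (apply : T → S → S) (enabled : T → S → Prop)

def IsExecution (f : ℕ → S) : Prop :=
  ∀ n, f (n + 1) = f n ∨ ∃ t, enabled t (f n) ∧ f (n + 1) = apply t (f n)

def IsWeaklyFair (f : ℕ → S) : Prop :=
  ∀ t n, (∀ m, n ≤ m → enabled t (f m)) → ∃ m, n ≤ m ∧ f (m + 1) = apply t (f m)

def IsStable (P : S → Prop) : Prop :=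
  ∀ t s, P s → P (apply t s)

variable {apply enabled} {f : ℕ → S} {P R : S → Prop}

theorem IsStable.and (hP : IsStable apply P) (hR : IsStable apply R) :
    IsStable apply fun s => P s ∧ R s :=
  fun t s h => ⟨hP t s h.1, hR t s h.2⟩

theorem IsExecution.of_isStable (hf : IsExecution apply enabled f) (hP : IsStable apply P)
    {n m : ℕ} (hnm : n ≤ m) (hn : P (f n)) : P (f m) := by
  induction m, hnm using Nat.le_induction with
  | base => exact hn
  | succ k _ ih =>
    rcases hf k with hstutter | ⟨t, -, hfire⟩
    · rwa [hstutter]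
    · rw [hfire]
      exact hP t _ ih

theorem IsWeaklyFair.leadsTo (hfair : IsWeaklyFair apply enabled f)
    (hf : IsExecution apply enabled f) (hP : IsStable apply P) (t : T)
    (hen : ∀ s, P s → ¬ R s → enabled t s) (hR : ∀ s, R (apply t s)) {n : ℕ} (hn : P (f n)) :
    ∃ m, n ≤ m ∧ P (f m) ∧ R (f m) := by
  have hPm : ∀ m, n ≤ m → P (f m) := fun m hnm => hf.of_isStable hP hnm hn
  by_contra! hnever
  obtain ⟨m, hnm, hfire⟩ :=
    hfair t n fun m hnm => hen _ (hPm m hnm) (hnever m hnm (hPm m hnm))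
  have hm : n ≤ m + 1 := hnm.trans m.le_succ
  exact hnever (m + 1) hm (hPm _ hm) (hfire ▸ hR _)

end TransitionSystem

theorem isStable_ag1Self : IsStable applyT fun s => s.ag1Self = true := by
  intro t s h; cases t <;> first | rfl | exact h

theorem isStable_ag2Other : IsStable applyT fun s => s.ag2Other = true := by
  intro t s h; cases t <;> first | rfl | exact h

theorem isStable_ag2Self : IsStable applyT fun s => s.ag2Self = true := by
  intro t s h; cases t <;> first | rfl | exact h

theorem shared_beliefs_eventually_reached_general (f : ℕ → SBState)
    (hstep : ∀ n, f (n + 1) = f n ∨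
      ∃ t : SBTrans, enabledT t (f n) ∧ f (n + 1) = applyT t (f n))
    (hfair : ∀ (t : SBTrans) (n : ℕ),
      (∀ m, n ≤ m → enabledT t (f m)) → ∃ m, n ≤ m ∧ f (m + 1) = applyT t (f m)) :
    ∃ n, allShared (f n) := by
  have fair : IsWeaklyFair applyT enabledT f := hfair
  have unset {b : Bool} (h : ¬ b = true) : b = false := Bool.eq_false_iff.mpr h
  obtain ⟨n₁, -, -, h₁⟩ := fair.leadsTo hstep (P := fun _ => True) (fun _ _ _ => trivial)
    .t0 (fun _ _ hR => unset hR) (fun _ => rfl) (n := 0) trivial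
  obtain ⟨n₂, -, h₁, h₂⟩ := fair.leadsTo hstep isStable_ag1Self
    .t1 (fun _ hP hR => ⟨hP, unset hR⟩) (fun _ => rfl) h₁
  obtain ⟨n₃, -, ⟨h₁, h₂⟩, h₃⟩ := fair.leadsTo hstep (isStable_ag1Self.and isStable_ag2Other)
    .t2 (fun _ hP hR => ⟨hP.2, unset hR⟩) (fun _ => rfl) ⟨h₁, h₂⟩
  obtain ⟨n₄, -, ⟨⟨h₁, h₂⟩, h₃⟩, h₄⟩ := fair.leadsTo hstep
    ((isStable_ag1Self.and isStable_ag2Other).and isStable_ag2Self)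
    .t3 (fun _ hP hR => ⟨hP.2, unset hR⟩) (fun _ => rfl) ⟨⟨h₁, h₂⟩, h₃⟩
  exact ⟨n₄, h₁, h₄, h₃, h₂⟩

/-- Reachability of shared beliefs: under reliable delivery and fair scheduling,
every fair execution starting from the initial state eventually reaches a state
where both agents believe b[self] and b[other]. -/
theorem shared_beliefs_eventually_reached (f : ℕ → SBState)
    (hinit : f 0 = ⟨false, false, false, false⟩)
    (hstep : ∀ n, f (n + 1) = f n ∨
      ∃ t : SBTrans, enabledT t (f n) ∧ f (n + 1) = applyT t (f n))
    (hfair : ∀ (t : SBTrans) (n : ℕ),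
      (∀ m, n ≤ m → enabledT t (f m)) → ∃ m, n ≤ m ∧ f (m + 1) = applyT t (f m)) :
    ∃ n, allShared (f n) :=
  shared_beliefs_eventually_reached_general f hstep hfair
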